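/- Let f : ℝ → ℝ be three times continuously differentiable with f > 0 and f' > 0, assume (f'/f)'(y) < (Φ'/Φ)'(y) and (f'/f)'(y) < (Φ''/Φ')'(y) for all y, and assume there exist y₀, y∞ ∈ ℝ with (f'/f)(y₀) = (Φ'/Φ)(y₀) and (f'/f)(y∞) = (Φ''/Φ')(y∞). Let Θ > 0 and let 𝕪 : [0,Θ] → ℝ be the solution of 𝕪'(θ) = M₂(𝕪(θ))/M₁'(𝕪(θ)) with 𝕪(0) = y₀ (so M₁(𝕪(0)) = 0), and define 𝕣(ℓ) := ∫₀^ℓ (1 - 𝕪'(x)) · (Φ'(𝕪(x))/Φ(𝕪(x))) dx. Then exp(-𝕣(Θ)) · ∫₀^Θ f(𝕪(ℓ)) · exp(𝕣(ℓ)) dℓ = Φ(𝕪(Θ)) · M₁(𝕪(Θ)). -/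

import Mathlib

open MeasureTheory Real Filter

/-- `Fa a x = ∫₀^∞ exp(-t² - 2xt) · t^a dt`, a Hermite-type function of negative degree. -/
noncomputable def Fa (a x : ℝ) : ℝ :=
  ∫ t in Set.Ioi (0 : ℝ), Real.exp (-(t ^ 2) - 2 * x * t) * t ^ a

/-- `Phi β σh δ c x = F_a(u(x))` with `a = δ/β - 1` and `u(x) = (c - βx)/(√β·σ̂)`. -/
noncomputable def Phi (β σh δ c : ℝ) (x : ℝ) : ℝ :=
  Fa (δ / β - 1) ((c - β * x) / (Real.sqrt β * σh))

/-- `M₁ = (f·Φ' - f'·Φ)/D` with `D = (Φ')² - Φ·Φ''`. -/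
noncomputable def M1 (β σh δ c : ℝ) (f : ℝ → ℝ) (y : ℝ) : ℝ :=
  (f y * deriv (Phi β σh δ c) y - deriv f y * Phi β σh δ c y) /
    ((deriv (Phi β σh δ c) y) ^ 2 - Phi β σh δ c y * deriv (deriv (Phi β σh δ c)) y)

/-- `M₂ = (f'·Φ' - f·Φ'')/D` with `D = (Φ')² - Φ·Φ''`. -/
noncomputable def M2 (β σh δ c : ℝ) (f : ℝ → ℝ) (y : ℝ) : ℝ :=
  (deriv f y * deriv (Phi β σh δ c) y - f y * deriv (deriv (Phi β σh δ c)) y) /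
    ((deriv (Phi β σh δ c) y) ^ 2 - Phi β σh δ c y * deriv (deriv (Phi β σh δ c)) y)

/-!
Write `G = f'/f - Φ'/Φ` and `H = f'/f - Φ''/Φ'`. The Turán inequality for `F_a` (a strict
Cauchy–Schwarz inequality for the moments of `exp(-t² - 2xt) t^a`) gives `H < G`, and the two
hypotheses on `(f'/f)'` say that `G` and `H` are strictly decreasing, with zeros `y₀` and `y∞`.
Hence `y∞ < y₀`, and `G ≥ 0 ≥ H` on `[y∞, y₀]`. In these terms `M₁ = (f/Φ')·G/(G - H)`,
`M₂ = (f/Φ)·H/(H - G)`, so `Φ M₂ + Φ' M₁ = f`, and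
`M₁' = (f/Φ')·(G H' - H G' + (G - H) G H)/(G - H)²`. On `[y∞, y₀]` the three terms of the
numerator are `≤ 0` and `G`, `H` do not vanish together, so `M₁' < 0` there.
The field `M₂/M₁'` of the boundary ODE points into `[y∞, y₀]` just outside it, so `𝕪` stays in
this interval and `M₁'(𝕪) ≠ 0`. Along `𝕪`, `V = Φ(𝕪)·M₁(𝕪)` then solves `V' = f(𝕪) - 𝕣' V` with
`V(0) = 0`, and the integrating factor `exp 𝕣` gives the formula.
-/

open Set Topology

theorem setIntegral_pos_of_ae_pos {α : Type*} [MeasurableSpace α] {μ : Measure α} {s : Set α}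
    {g : α → ℝ} (hs : MeasurableSet s) (hμs : μ s ≠ 0) (hg : IntegrableOn g s μ)
    (hpos : ∀ᵐ x ∂μ.restrict s, 0 < g x) : 0 < ∫ x in s, g x ∂μ := by
  refine (setIntegral_pos_iff_support_of_nonneg_ae (hpos.mono fun _ h => h.le) hg).2 ?_
  have hsupp : Function.support g =ᵐ[μ.restrict s] univ :=
    ae_eq_univ.2 (ae_iff.1 (hpos.mono fun _ h => h.ne'))
  rw [← Measure.restrict_apply' hs, measure_congr hsupp, Measure.restrict_apply_univ]
  exact pos_iff_ne_zero.2 hμs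

theorem le_of_hasDerivWithinAt_comp {Y F : ℝ → ℝ} {a b y : ℝ}
    (hY : ∀ t ∈ Icc a b, HasDerivWithinAt Y (F (Y t)) (Icc a b) t) (ha : Y a ≤ y)
    (hF : ∀ᶠ z in 𝓝[>] y, F z ≤ 0) : ∀ t ∈ Icc a b, Y t ≤ y := by
  obtain ⟨u, hyu, hu⟩ := mem_nhdsGT_iff_exists_Ioo_subset.1 hF
  intro t ht
  have hab : 0 < 1 + (b - a) := by linarith [ht.1.trans ht.2]
  -- `Y` stays below `y + r (1 + (s - a))` for small `r > 0`: at a contact point `Y' = F Y ≤ 0 < r`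
  have hbarrier : ∀ r ∈ Ioo 0 ((u - y) / (1 + (b - a))), Y t ≤ y + r * (1 + (t - a)) := by
    rintro r ⟨hr, hru⟩
    rw [lt_div_iff₀ hab] at hru
    refine image_le_of_deriv_right_lt_deriv_boundary' (B := fun s => y + r * (1 + (s - a)))
      (fun s hs => (hY s hs).continuousWithinAt)
      (fun s hs => (hY s (Ico_subset_Icc_self hs)).mono_of_mem_nhdsWithin
        (Icc_mem_nhdsGE_of_mem hs)) (by simp only [sub_self]; linarith) (by fun_prop)
      (fun s _ => ((((hasDerivWithinAt_id s _).sub_const a).const_add 1).const_mul r).const_add y)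
      (fun s hs hYs => ?_) ht
    have hYs' : Y s ∈ Ioo y u := by
      rw [hYs]
      constructor <;> nlinarith [hs.1, hs.2]
    simpa using (hu hYs').out.trans_lt hr
  refine ge_of_tendsto (x := 𝓝[>] 0) ?_
    (mem_of_superset (Ioo_mem_nhdsGT (div_pos (sub_pos.2 hyu) hab)) hbarrier)
  exact tendsto_nhdsWithin_of_tendsto_nhds (Continuous.tendsto' (by fun_prop) 0 y (by simp))

theorem mapsTo_Icc_of_hasDerivWithinAt_comp {Y F : ℝ → ℝ} {a b y₁ y₂ : ℝ}
    (hY : ∀ t ∈ Icc a b, HasDerivWithinAt Y (F (Y t)) (Icc a b) t) (ha : Y a ∈ Icc y₁ y₂)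
    (hF₁ : ∀ᶠ z in 𝓝[<] y₁, 0 ≤ F z) (hF₂ : ∀ᶠ z in 𝓝[>] y₂, F z ≤ 0) :
    MapsTo Y (Icc a b) (Icc y₁ y₂) := by
  have hlow := le_of_hasDerivWithinAt_comp (Y := -Y) (F := fun z => -F (-z)) (y := -y₁)
    (fun t ht => by simpa using (hY t ht).neg) (neg_le_neg ha.1)
    (tendsto_neg_nhdsGT_neg.eventually (hF₁.mono fun _ h => neg_nonpos.2 h))
  exact fun t ht => ⟨neg_le_neg_iff.1 (hlow t ht), le_of_hasDerivWithinAt_comp hY ha.2 hF₂ t ht⟩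

theorem integral_mul_exp_integral_eq {V g q : ℝ → ℝ} {a b : ℝ} (hab : a ≤ b)
    (hV : ContinuousOn V (Icc a b)) (hq : ContinuousOn q (Icc a b)) (hg : ContinuousOn g (Icc a b))
    (hV' : ∀ t ∈ Ioo a b, HasDerivAt V (g t - q t * V t) t) :
    exp (-∫ x in a..b, q x) * ∫ t in a..b, g t * exp (∫ x in a..t, q x) =
      V b - exp (-∫ x in a..b, q x) * V a := by
  set R : ℝ → ℝ := fun t => ∫ x in a..t, q x
  have hqi : IntegrableOn q (Icc a b) := hq.integrableOn_compact isCompact_Icc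
  have hR : ContinuousOn R (Icc a b) := by
    simpa [uIcc_of_le hab] using intervalIntegral.continuousOn_primitive_interval (a := a) (b := b)
      (by simpa [uIcc_of_le hab] using hqi)
  have hR' : ∀ t ∈ Ioo a b, HasDerivAt R (q t) t := fun t ht =>
    intervalIntegral.integral_hasDerivAt_right
      ((hq.mono (Icc_subset_Icc_right ht.2.le)).intervalIntegrable_of_Icc ht.1.le)
      ((hq.mono Ioo_subset_Icc_self).stronglyMeasurableAtFilter isOpen_Ioo t ht)
      (hq.continuousAt (Icc_mem_nhds ht.1 ht.2))
  have hFTC : ∫ t in a..b, g t * exp (R t) = V b * exp (R b) - V a * exp (R a) := by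
    refine intervalIntegral.integral_eq_sub_of_hasDeriv_right_of_le hab
      (hV.mul (continuous_exp.comp_continuousOn hR)) (fun t ht => ?_)
      ((hg.mul (continuous_exp.comp_continuousOn hR)).intervalIntegrable_of_Icc hab)
    refine ((hV' t ht).mul (hR' t ht).exp).hasDerivWithinAt.congr_deriv ?_
    ring
  rw [hFTC, show R a = 0 from intervalIntegral.integral_same, exp_zero, exp_neg]
  field_simp
  ring

theorem contDiff_logDeriv {g : ℝ → ℝ} {n : ℕ} (hg : ContDiff ℝ (n + 1) g) (h0 : ∀ y, g y ≠ 0) :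
    ContDiff ℝ n (logDeriv g) :=
  hg.deriv'.div (hg.of_le le_self_add) h0

theorem exp_neg_sq_sub_le (x t : ℝ) :
    exp (-(t ^ 2) - 2 * x * t) ≤ exp (2 * x ^ 2) * exp (-(1 / 2) * t ^ 2) := by
  rw [← exp_add]
  exact exp_le_exp.2 (by nlinarith [sq_nonneg (t + 2 * x)])

theorem integrableOn_Fa_integrand {a : ℝ} (ha : -1 < a) (x : ℝ) :
    IntegrableOn (fun t : ℝ => exp (-(t ^ 2) - 2 * x * t) * t ^ a) (Ioi 0) := by
  refine ((integrableOn_rpow_mul_exp_neg_mul_sq (b := 1 / 2) (by norm_num) ha).const_mul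
    (exp (2 * x ^ 2))).mono' (by fun_prop) ?_
  filter_upwards [ae_restrict_mem measurableSet_Ioi] with t (ht : 0 < t)
  rw [norm_of_nonneg (by positivity), mul_comm (t ^ a), ← mul_assoc]
  exact mul_le_mul_of_nonneg_right (exp_neg_sq_sub_le x t) (rpow_nonneg ht.le a)

theorem Fa_pos {a : ℝ} (ha : -1 < a) (x : ℝ) : 0 < Fa a x :=
  setIntegral_pos_of_ae_pos measurableSet_Ioi (by simp) (integrableOn_Fa_integrand ha x)
    (by filter_upwards [ae_restrict_mem measurableSet_Ioi] with t (ht : 0 < t); positivity)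

theorem hasDerivAt_Fa {a : ℝ} (ha : -1 < a) (x₀ : ℝ) :
    HasDerivAt (Fa a) (-2 * Fa (a + 1) x₀) x₀ := by
  have key := hasDerivAt_integral_of_dominated_loc_of_deriv_le (μ := volume.restrict (Ioi 0))
    (F := fun x t => exp (-(t ^ 2) - 2 * x * t) * t ^ a)
    (F' := fun x t => -2 * (exp (-(t ^ 2) - 2 * x * t) * t ^ (a + 1)))
    (bound := fun t => 2 * exp (2 * (|x₀| + 1) ^ 2) * (t ^ (a + 1) * exp (-(1 / 2) * t ^ 2)))
    (Metric.ball_mem_nhds x₀ one_pos) (.of_forall fun _ => by fun_prop)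
    (integrableOn_Fa_integrand ha x₀) (by fun_prop) ?bound
    ((integrableOn_rpow_mul_exp_neg_mul_sq (by norm_num) (by linarith)).const_mul _) ?diff
  · exact key.2.congr_deriv (by rw [integral_const_mul]; rfl)
  case bound =>
    filter_upwards [ae_restrict_mem measurableSet_Ioi] with t (ht : 0 < t) x hx
    have hx : x ^ 2 ≤ (|x₀| + 1) ^ 2 := by
      rw [Metric.mem_ball, Real.dist_eq] at hx
      nlinarith [abs_sub_abs_le_abs_sub x x₀, abs_nonneg x, sq_abs x]
    rw [norm_mul, norm_neg, Real.norm_two, norm_of_nonneg (by positivity)]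
    calc 2 * (exp (-(t ^ 2) - 2 * x * t) * t ^ (a + 1))
        ≤ 2 * (exp (2 * (|x₀| + 1) ^ 2) * exp (-(1 / 2) * t ^ 2) * t ^ (a + 1)) := by
          gcongr
          exact (exp_neg_sq_sub_le x t).trans (by gcongr)
      _ = _ := by ring
  case diff =>
    filter_upwards [ae_restrict_mem measurableSet_Ioi] with t (ht : 0 < t) x _
    have h := ((((hasDerivAt_id x).const_mul 2).mul_const t).const_sub (-(t ^ 2))).exp.mul_const
      (t ^ a)
    refine h.congr_deriv ?_
    rw [rpow_add_one ht.ne', id]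
    ring

theorem sq_Fa_add_one_lt_mul {a : ℝ} (ha : -1 < a) (x : ℝ) :
    Fa (a + 1) x ^ 2 < Fa a x * Fa (a + 2) x := by
  set w : ℝ → ℝ := fun t => exp (-(t ^ 2) - 2 * x * t) * t ^ a
  have hw₁ : EqOn (fun t => exp (-(t ^ 2) - 2 * x * t) * t ^ (a + 1)) (fun t => t * w t)
      (Ioi 0) := fun t (ht : 0 < t) => by simp only [w, rpow_add_one ht.ne']; ring
  have hw₂ : EqOn (fun t => exp (-(t ^ 2) - 2 * x * t) * t ^ (a + 2)) (fun t => t ^ 2 * w t)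
      (Ioi 0) := fun t (ht : 0 < t) => by
    simp only [w, rpow_add ht, rpow_two]; ring
  have I₀ : IntegrableOn w (Ioi 0) := integrableOn_Fa_integrand ha x
  have I₁ : IntegrableOn (fun t => t * w t) (Ioi 0) :=
    (integrableOn_Fa_integrand (by linarith) x).congr_fun hw₁ measurableSet_Ioi
  have I₂ : IntegrableOn (fun t => t ^ 2 * w t) (Ioi 0) :=
    (integrableOn_Fa_integrand (by linarith) x).congr_fun hw₂ measurableSet_Ioi
  set m := Fa (a + 1) x / Fa a x
  have hexpand : ∫ t in Ioi 0, (t - m) ^ 2 * w t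
      = Fa (a + 2) x - 2 * m * Fa (a + 1) x + m ^ 2 * Fa a x := by
    rw [show Fa a x = ∫ t in Ioi 0, w t from rfl, Fa, Fa,
      setIntegral_congr_fun measurableSet_Ioi hw₁, setIntegral_congr_fun measurableSet_Ioi hw₂,
      ← integral_const_mul, ← integral_const_mul, ← integral_sub I₂ (I₁.const_mul _),
      ← integral_add ?_ (I₀.const_mul _)]
    · congr 1 with t
      ring
    · exact I₂.sub (I₁.const_mul _)
  have hpos : 0 < ∫ t in Ioi 0, (t - m) ^ 2 * w t := by
    refine setIntegral_pos_of_ae_pos measurableSet_Ioi (by simp) ?_ ?_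
    · refine ((I₂.sub (I₁.const_mul (2 * m))).add (I₀.const_mul (m ^ 2))).congr_fun
        (fun t _ => by simp only [Pi.add_apply, Pi.sub_apply]; ring) measurableSet_Ioi
    · filter_upwards [ae_restrict_mem measurableSet_Ioi, ae_restrict_of_ae (volume.ae_ne m)]
        with t (ht : 0 < t) hne
      have := sub_ne_zero.2 hne
      positivity
  have hFa := Fa_pos ha x
  have hm : m * Fa a x = Fa (a + 1) x := div_mul_cancel₀ _ hFa.ne'
  nlinarith

/-- `phiDeriv β σh δ c n` is `Φ⁽ⁿ⁾`, because differentiating under the integral gives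
`F_a' = -2 F_{a+1}`. -/
noncomputable def phiDeriv (β σh δ c : ℝ) (n : ℕ) (x : ℝ) : ℝ :=
  (2 * β / (√β * σh)) ^ n * Fa (δ / β - 1 + n) ((c - β * x) / (√β * σh))

section Phi

variable {β σh δ c : ℝ}

theorem neg_one_lt_div_sub_one_add (hβ : 0 < β) (hδ : 0 < δ) (n : ℕ) : -1 < δ / β - 1 + n := by
  have := div_pos hδ hβ
  have := n.cast_nonneg (α := ℝ)
  linarith

theorem phiDeriv_zero : phiDeriv β σh δ c 0 = Phi β σh δ c := by
  ext x
  simp [phiDeriv, Phi]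

theorem hasDerivAt_phiDeriv (hβ : 0 < β) (hδ : 0 < δ) (n : ℕ) (x : ℝ) :
    HasDerivAt (phiDeriv β σh δ c n) (phiDeriv β σh δ c (n + 1) x) x := by
  have ha := neg_one_lt_div_sub_one_add hβ hδ n
  have hu : HasDerivAt (fun x => (c - β * x) / (√β * σh)) (-β / (√β * σh)) x := by
    simpa using (((hasDerivAt_id x).const_mul β).const_sub c).div_const (√β * σh)
  refine (((hasDerivAt_Fa ha _).comp x hu).const_mul _).congr_deriv ?_
  simp only [phiDeriv, Nat.cast_succ, add_assoc]
  ring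

theorem phiDeriv_pos (hβ : 0 < β) (hσ : 0 < σh) (hδ : 0 < δ) (n : ℕ) (x : ℝ) :
    0 < phiDeriv β σh δ c n x := by
  have ha := neg_one_lt_div_sub_one_add hβ hδ n
  have := Fa_pos ha ((c - β * x) / (√β * σh))
  unfold phiDeriv
  positivity

theorem sq_phiDeriv_succ_lt_mul (hβ : 0 < β) (hσ : 0 < σh) (hδ : 0 < δ) (n : ℕ) (x : ℝ) :
    phiDeriv β σh δ c (n + 1) x ^ 2 < phiDeriv β σh δ c n x * phiDeriv β σh δ c (n + 2) x := by
  set k := 2 * β / (√β * σh)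
  have h := mul_lt_mul_of_pos_left
    (sq_Fa_add_one_lt_mul (neg_one_lt_div_sub_one_add hβ hδ n) ((c - β * x) / (√β * σh)))
    (by positivity : 0 < k ^ (2 * n + 2))
  simp only [phiDeriv, Nat.cast_add, Nat.cast_ofNat, Nat.cast_one, ← add_assoc]
  calc _ = k ^ (2 * n + 2) * Fa (δ / β - 1 + n + 1) ((c - β * x) / (√β * σh)) ^ 2 := by ring
    _ < _ := h
    _ = _ := by ring

theorem contDiff_phiDeriv (hβ : 0 < β) (hδ : 0 < δ) (k n : ℕ) :
    ContDiff ℝ k (phiDeriv β σh δ c n) := by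
  induction k generalizing n with
  | zero => exact contDiff_zero.2 (continuous_iff_continuousAt.2 fun x =>
      (hasDerivAt_phiDeriv hβ hδ n x).continuousAt)
  | succ k ih =>
    rw [Nat.cast_succ]
    refine contDiff_succ_iff_deriv.2 ⟨fun x => (hasDerivAt_phiDeriv hβ hδ n x).differentiableAt,
      by simp, ?_⟩
    rw [show deriv (phiDeriv β σh δ c n) = phiDeriv β σh δ c (n + 1) from
      funext fun x => (hasDerivAt_phiDeriv hβ hδ n x).deriv]
    exact ih (n + 1)

theorem deriv_Phi (hβ : 0 < β) (hδ : 0 < δ) : deriv (Phi β σh δ c) = phiDeriv β σh δ c 1 := by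
  rw [← phiDeriv_zero]
  exact funext fun x => (hasDerivAt_phiDeriv hβ hδ 0 x).deriv

theorem deriv_deriv_Phi (hβ : 0 < β) (hδ : 0 < δ) :
    deriv (deriv (Phi β σh δ c)) = phiDeriv β σh δ c 2 := by
  rw [deriv_Phi hβ hδ]
  exact funext fun x => (hasDerivAt_phiDeriv hβ hδ 1 x).deriv

theorem Phi_pos (hβ : 0 < β) (hδ : 0 < δ) (y : ℝ) : 0 < Phi β σh δ c y :=
  Fa_pos (by simpa using neg_one_lt_div_sub_one_add hβ hδ 0) _

theorem deriv_Phi_pos (hβ : 0 < β) (hσ : 0 < σh) (hδ : 0 < δ) (y : ℝ) :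
    0 < deriv (Phi β σh δ c) y :=
  deriv_Phi hβ hδ ▸ phiDeriv_pos hβ hσ hδ 1 y

theorem sq_deriv_Phi_lt_mul (hβ : 0 < β) (hσ : 0 < σh) (hδ : 0 < δ) (y : ℝ) :
    deriv (Phi β σh δ c) y ^ 2 < Phi β σh δ c y * deriv (deriv (Phi β σh δ c)) y := by
  rw [deriv_deriv_Phi hβ hδ, deriv_Phi hβ hδ, ← phiDeriv_zero]
  exact sq_phiDeriv_succ_lt_mul hβ hσ hδ 0 y

theorem contDiff_Phi (hβ : 0 < β) (hδ : 0 < δ) (k : ℕ) : ContDiff ℝ k (Phi β σh δ c) :=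
  phiDeriv_zero (β := β) ▸ contDiff_phiDeriv hβ hδ k 0

end Phi

namespace Boundary

variable {β σh δ c : ℝ} {f : ℝ → ℝ}

noncomputable def G (β σh δ c : ℝ) (f : ℝ → ℝ) : ℝ → ℝ := logDeriv f - logDeriv (Phi β σh δ c)

noncomputable def H (β σh δ c : ℝ) (f : ℝ → ℝ) : ℝ → ℝ :=
  logDeriv f - logDeriv (deriv (Phi β σh δ c))

theorem H_lt_G (hβ : 0 < β) (hσ : 0 < σh) (hδ : 0 < δ) (y : ℝ) :
    H β σh δ c f y < G β σh δ c f y := by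
  have h₀ := Phi_pos (σh := σh) (c := c) hβ hδ y
  have h₁ := deriv_Phi_pos (c := c) hβ hσ hδ y
  simp only [G, H, Pi.sub_apply, logDeriv_apply, sub_lt_sub_iff_left]
  rw [div_lt_div_iff₀ h₀ h₁]
  nlinarith [sq_deriv_Phi_lt_mul (c := c) hβ hσ hδ y]

theorem contDiff_G (hβ : 0 < β) (hδ : 0 < δ) (hf : ContDiff ℝ 3 f) (hfpos : ∀ y, 0 < f y) :
    ContDiff ℝ 1 (G β σh δ c f) :=
  (contDiff_logDeriv (n := 1) (hf.of_le (by norm_num)) fun y => (hfpos y).ne').sub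
    (contDiff_logDeriv (contDiff_Phi hβ hδ 2) fun y => (Phi_pos hβ hδ y).ne')

theorem contDiff_H (hβ : 0 < β) (hσ : 0 < σh) (hδ : 0 < δ) (hf : ContDiff ℝ 3 f)
    (hfpos : ∀ y, 0 < f y) : ContDiff ℝ 1 (H β σh δ c f) :=
  (contDiff_logDeriv (n := 1) (hf.of_le (by norm_num)) fun y => (hfpos y).ne').sub
    (contDiff_logDeriv (contDiff_Phi hβ hδ 3).deriv' fun y => (deriv_Phi_pos hβ hσ hδ y).ne')

theorem deriv_G_neg (hβ : 0 < β) (hδ : 0 < δ) (hf : ContDiff ℝ 3 f) (hfpos : ∀ y, 0 < f y)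
    (hb : ∀ y, deriv (fun z => deriv f z / f z) y <
      deriv (fun z => deriv (Phi β σh δ c) z / Phi β σh δ c z) y) (y : ℝ) :
    deriv (G β σh δ c f) y < 0 := by
  have h₁ := contDiff_logDeriv (n := 1) (hf.of_le (by norm_num)) fun y => (hfpos y).ne'
  have h₂ := contDiff_logDeriv (contDiff_Phi (σh := σh) (c := c) hβ hδ 2) fun y =>
    (Phi_pos hβ hδ y).ne'
  rw [G, deriv_sub (h₁.differentiable one_ne_zero y) (h₂.differentiable one_ne_zero y)]
  exact sub_neg.2 (hb y)

theorem deriv_H_neg (hβ : 0 < β) (hσ : 0 < σh) (hδ : 0 < δ) (hf : ContDiff ℝ 3 f)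
    (hfpos : ∀ y, 0 < f y)
    (hc : ∀ y, deriv (fun z => deriv f z / f z) y <
      deriv (fun z => deriv (deriv (Phi β σh δ c)) z / deriv (Phi β σh δ c) z) y) (y : ℝ) :
    deriv (H β σh δ c f) y < 0 := by
  have h₁ := contDiff_logDeriv (n := 1) (hf.of_le (by norm_num)) fun y => (hfpos y).ne'
  have h₂ := contDiff_logDeriv (contDiff_Phi (σh := σh) (c := c) hβ hδ 3).deriv' fun y =>
    (deriv_Phi_pos hβ hσ hδ y).ne'
  rw [H, deriv_sub (h₁.differentiable one_ne_zero y) (h₂.differentiable one_ne_zero y)]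
  exact sub_neg.2 (hc y)

theorem M1_eq (hβ : 0 < β) (hσ : 0 < σh) (hδ : 0 < δ) (hfpos : ∀ y, 0 < f y) :
    M1 β σh δ c f = fun y => f y / deriv (Phi β σh δ c) y *
      (G β σh δ c f y / (G β σh δ c f y - H β σh δ c f y)) := by
  ext y
  have h₀ := (Phi_pos (σh := σh) (c := c) hβ hδ y).ne'
  have h₁ := (deriv_Phi_pos (c := c) hβ hσ hδ y).ne'
  have hD := sq_deriv_Phi_lt_mul (c := c) hβ hσ hδ y
  have hf := (hfpos y).ne'
  simp only [M1, G, H, Pi.sub_apply, logDeriv_apply]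
  generalize Phi β σh δ c y = p₀, deriv (Phi β σh δ c) y = p₁,
    deriv (deriv (Phi β σh δ c)) y = p₂, f y = f₀, deriv f y = f₁ at *
  have hGH : f₁ / f₀ - p₁ / p₀ - (f₁ / f₀ - p₂ / p₁) = (p₀ * p₂ - p₁ ^ 2) / (p₀ * p₁) := by
    field_simp; ring
  rw [hGH]
  have : p₀ * p₂ - p₁ ^ 2 ≠ 0 := by linarith
  have : p₁ ^ 2 - p₀ * p₂ ≠ 0 := by linarith
  field_simp
  ring

theorem M2_eq (hβ : 0 < β) (hσ : 0 < σh) (hδ : 0 < δ) (hfpos : ∀ y, 0 < f y) :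
    M2 β σh δ c f = fun y => f y / Phi β σh δ c y *
      (H β σh δ c f y / (H β σh δ c f y - G β σh δ c f y)) := by
  ext y
  have h₀ := (Phi_pos (σh := σh) (c := c) hβ hδ y).ne'
  have h₁ := (deriv_Phi_pos (c := c) hβ hσ hδ y).ne'
  have hD := sq_deriv_Phi_lt_mul (c := c) hβ hσ hδ y
  have hf := (hfpos y).ne'
  simp only [M2, G, H, Pi.sub_apply, logDeriv_apply]
  generalize Phi β σh δ c y = p₀, deriv (Phi β σh δ c) y = p₁,
    deriv (deriv (Phi β σh δ c)) y = p₂, f y = f₀, deriv f y = f₁ at *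
  have hHG : f₁ / f₀ - p₂ / p₁ - (f₁ / f₀ - p₁ / p₀) = (p₁ ^ 2 - p₀ * p₂) / (p₀ * p₁) := by
    field_simp; ring
  rw [hHG]
  have : p₁ ^ 2 - p₀ * p₂ ≠ 0 := by linarith
  field_simp

theorem Phi_mul_M2_add_deriv_Phi_mul_M1 (hβ : 0 < β) (hσ : 0 < σh) (hδ : 0 < δ)
    (hfpos : ∀ y, 0 < f y) (y : ℝ) :
    Phi β σh δ c y * M2 β σh δ c f y + deriv (Phi β σh δ c) y * M1 β σh δ c f y = f y := by
  have h₀ := (Phi_pos (σh := σh) (c := c) hβ hδ y).ne'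
  have h₁ := (deriv_Phi_pos (c := c) hβ hσ hδ y).ne'
  have hGH := sub_ne_zero.2 (H_lt_G (f := f) (c := c) hβ hσ hδ y).ne'
  have hHG := sub_ne_zero.2 (H_lt_G (f := f) (c := c) hβ hσ hδ y).ne
  rw [M1_eq hβ hσ hδ hfpos, M2_eq hβ hσ hδ hfpos]
  field_simp
  ring

theorem hasDerivAt_M1 (hβ : 0 < β) (hσ : 0 < σh) (hδ : 0 < δ) (hf : ContDiff ℝ 3 f)
    (hfpos : ∀ y, 0 < f y) (y : ℝ) :
    HasDerivAt (M1 β σh δ c f) (f y / deriv (Phi β σh δ c) y *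
      ((G β σh δ c f y * deriv (H β σh δ c f) y - H β σh δ c f y * deriv (G β σh δ c f) y +
        (G β σh δ c f y - H β σh δ c f y) * G β σh δ c f y * H β σh δ c f y) /
        (G β σh δ c f y - H β σh δ c f y) ^ 2)) y := by
  have h₁ := (deriv_Phi_pos (c := c) hβ hσ hδ y).ne'
  have hGH := sub_ne_zero.2 (H_lt_G (f := f) (c := c) hβ hσ hδ y).ne'
  have hu : HasDerivAt (fun z => f z / deriv (Phi β σh δ c) z)
      (f y / deriv (Phi β σh δ c) y * H β σh δ c f y) y := by
    refine ((hf.differentiable (by norm_num) y).hasDerivAt.div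
      (((contDiff_Phi hβ hδ 2).deriv'.differentiable one_ne_zero) y).hasDerivAt h₁).congr_deriv ?_
    simp only [H, Pi.sub_apply, logDeriv_apply]
    field_simp [(hfpos y).ne']
  have hG := ((contDiff_G (σh := σh) (c := c) hβ hδ hf hfpos).differentiable one_ne_zero
    y).hasDerivAt
  have hH := ((contDiff_H (c := c) hβ hσ hδ hf hfpos).differentiable one_ne_zero y).hasDerivAt
  rw [M1_eq hβ hσ hδ hfpos]
  refine (hu.mul (hG.div (hG.sub hH) hGH)).congr_deriv ?_
  simp only [Pi.div_apply, Pi.sub_apply]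
  field_simp
  ring

theorem continuous_M1 (hβ : 0 < β) (hσ : 0 < σh) (hδ : 0 < δ) (hf : ContDiff ℝ 3 f)
    (hfpos : ∀ y, 0 < f y) : Continuous (M1 β σh δ c f) :=
  continuous_iff_continuousAt.2 fun y => (hasDerivAt_M1 hβ hσ hδ hf hfpos y).continuousAt

theorem continuous_M2 (hβ : 0 < β) (hσ : 0 < σh) (hδ : 0 < δ) (hf : ContDiff ℝ 3 f)
    (hfpos : ∀ y, 0 < f y) : Continuous (M2 β σh δ c f) := by
  have hG := (contDiff_G (σh := σh) (c := c) hβ hδ hf hfpos).continuous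
  have hH := (contDiff_H (c := c) hβ hσ hδ hf hfpos).continuous
  rw [M2_eq hβ hσ hδ hfpos]
  exact (hf.continuous.div (contDiff_Phi hβ hδ 0).continuous fun y => (Phi_pos hβ hδ y).ne').mul
    (hH.div (hH.sub hG) fun y => (sub_neg.2 (H_lt_G hβ hσ hδ y)).ne)

theorem continuous_deriv_M1 (hβ : 0 < β) (hσ : 0 < σh) (hδ : 0 < δ) (hf : ContDiff ℝ 3 f)
    (hfpos : ∀ y, 0 < f y) : Continuous (deriv (M1 β σh δ c f)) := by
  have hG := contDiff_G (σh := σh) (c := c) hβ hδ hf hfpos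
  have hH := contDiff_H (c := c) hβ hσ hδ hf hfpos
  rw [show deriv (M1 β σh δ c f) = _ from
    funext fun y => (hasDerivAt_M1 hβ hσ hδ hf hfpos y).deriv]
  exact (hf.continuous.div ((contDiff_Phi hβ hδ 1).continuous_deriv le_rfl)
    fun y => (deriv_Phi_pos hβ hσ hδ y).ne').mul
    ((((hG.continuous.mul (hH.continuous_deriv le_rfl)).sub
      (hH.continuous.mul (hG.continuous_deriv le_rfl))).add
      (((hG.continuous.sub hH.continuous).mul hG.continuous).mul hH.continuous)).div
      ((hG.continuous.sub hH.continuous).pow 2)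
      fun y => pow_ne_zero 2 (sub_pos.2 (H_lt_G hβ hσ hδ y)).ne')

theorem deriv_M1_neg (hβ : 0 < β) (hσ : 0 < σh) (hδ : 0 < δ) (hf : ContDiff ℝ 3 f)
    (hfpos : ∀ y, 0 < f y) {y : ℝ} (hG' : deriv (G β σh δ c f) y < 0)
    (hH' : deriv (H β σh δ c f) y < 0) (hG : 0 ≤ G β σh δ c f y) (hH : H β σh δ c f y ≤ 0) :
    deriv (M1 β σh δ c f) y < 0 := by
  have hHG := H_lt_G (f := f) (c := c) hβ hσ hδ y
  rw [(hasDerivAt_M1 hβ hσ hδ hf hfpos y).deriv]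
  refine mul_neg_of_pos_of_neg (div_pos (hfpos y) (deriv_Phi_pos hβ hσ hδ y))
    (div_neg_of_neg_of_pos ?_ (pow_pos (sub_pos.2 hHG) 2))
  generalize G β σh δ c f y = g, H β σh δ c f y = h, deriv (G β σh δ c f) y = g',
    deriv (H β σh δ c f) y = h' at *
  have hgh : (g - h) * g * h ≤ 0 :=
    mul_nonpos_of_nonneg_of_nonpos (mul_nonneg (sub_pos.2 hHG).le hG) hH
  rcases hG.eq_or_lt with rfl | hg
  · nlinarith [mul_pos_of_neg_of_neg hHG hG']
  · nlinarith [mul_neg_of_pos_of_neg hg hH', mul_nonneg_of_nonpos_of_nonpos hH hG'.le]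

theorem M2_nonpos (hβ : 0 < β) (hσ : 0 < σh) (hδ : 0 < δ) (hfpos : ∀ y, 0 < f y) {y : ℝ}
    (hH : 0 ≤ H β σh δ c f y) : M2 β σh δ c f y ≤ 0 := by
  rw [M2_eq hβ hσ hδ hfpos]
  exact mul_nonpos_of_nonneg_of_nonpos (div_pos (hfpos y) (Phi_pos hβ hδ y)).le
    (div_nonpos_of_nonneg_of_nonpos hH (sub_neg.2 (H_lt_G hβ hσ hδ y)).le)

theorem M2_nonneg (hβ : 0 < β) (hσ : 0 < σh) (hδ : 0 < δ) (hfpos : ∀ y, 0 < f y) {y : ℝ}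
    (hH : H β σh δ c f y ≤ 0) : 0 ≤ M2 β σh δ c f y := by
  rw [M2_eq hβ hσ hδ hfpos]
  exact mul_nonneg (div_pos (hfpos y) (Phi_pos hβ hδ y)).le
    (div_nonneg_of_nonpos hH (sub_neg.2 (H_lt_G hβ hσ hδ y)).le)

theorem deriv_M1_neg_of_mem_Icc (hβ : 0 < β) (hσ : 0 < σh) (hδ : 0 < δ) (hf : ContDiff ℝ 3 f)
    (hfpos : ∀ y, 0 < f y) (hG' : ∀ y, deriv (G β σh δ c f) y < 0)
    (hH' : ∀ y, deriv (H β σh δ c f) y < 0) {y₀ yinf : ℝ} (hy₀ : G β σh δ c f y₀ = 0)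
    (hyinf : H β σh δ c f yinf = 0) {y : ℝ} (hy : y ∈ Icc yinf y₀) :
    deriv (M1 β σh δ c f) y < 0 :=
  deriv_M1_neg hβ hσ hδ hf hfpos (hG' y) (hH' y)
    (hy₀ ▸ (strictAnti_of_deriv_neg hG').antitone hy.2)
    (hyinf ▸ (strictAnti_of_deriv_neg hH').antitone hy.1)

theorem mapsTo_Icc_of_hasDerivWithinAt (hβ : 0 < β) (hσ : 0 < σh) (hδ : 0 < δ)
    (hf : ContDiff ℝ 3 f) (hfpos : ∀ y, 0 < f y) (hG' : ∀ y, deriv (G β σh δ c f) y < 0)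
    (hH' : ∀ y, deriv (H β σh δ c f) y < 0) {y₀ yinf : ℝ} (hy₀ : G β σh δ c f y₀ = 0)
    (hyinf : H β σh δ c f yinf = 0) {Y : ℝ → ℝ} {a b : ℝ}
    (hY : ∀ t ∈ Icc a b, HasDerivWithinAt Y
      (M2 β σh δ c f (Y t) / deriv (M1 β σh δ c f) (Y t)) (Icc a b) t)
    (hYa : Y a = y₀) : MapsTo Y (Icc a b) (Icc yinf y₀) := by
  have hH := strictAnti_of_deriv_neg hH'
  have hlt : yinf < y₀ := hH.lt_iff_gt.1 (by linarith [H_lt_G (f := f) (c := c) hβ hσ hδ y₀])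
  have hM1 : ∀ p ∈ Icc yinf y₀, ∀ᶠ z in 𝓝 p, deriv (M1 β σh δ c f) z < 0 := fun p hp =>
    (continuous_deriv_M1 hβ hσ hδ hf hfpos).continuousAt.eventually_lt continuousAt_const
      (deriv_M1_neg_of_mem_Icc hβ hσ hδ hf hfpos hG' hH' hy₀ hyinf hp)
  refine mapsTo_Icc_of_hasDerivWithinAt_comp
    (F := fun y => M2 β σh δ c f y / deriv (M1 β σh δ c f) y) hY
    (by rw [hYa]; exact ⟨hlt.le, le_rfl⟩) ?_ ?_
  · filter_upwards [nhdsWithin_le_nhds (hM1 yinf ⟨le_rfl, hlt.le⟩), self_mem_nhdsWithin]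
      with z hz (hz' : z < yinf)
    exact div_nonneg_of_nonpos (M2_nonpos hβ hσ hδ hfpos (hyinf ▸ hH hz').le) hz.le
  · filter_upwards [nhdsWithin_le_nhds (hM1 y₀ ⟨hlt.le, le_rfl⟩), self_mem_nhdsWithin]
      with z hz (hz' : y₀ < z)
    exact div_nonpos_of_nonneg_of_nonpos
      (M2_nonneg hβ hσ hδ hfpos (hyinf ▸ hH (hlt.trans hz')).le) hz.le

theorem hasDerivAt_Phi_comp_mul_M1_comp (hβ : 0 < β) (hσ : 0 < σh) (hδ : 0 < δ)
    (hf : ContDiff ℝ 3 f) (hfpos : ∀ y, 0 < f y) {Y : ℝ → ℝ} {v t : ℝ} (hY : HasDerivAt Y v t)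
    (hv : deriv (M1 β σh δ c f) (Y t) * v = M2 β σh δ c f (Y t)) :
    HasDerivAt (fun s => Phi β σh δ c (Y s) * M1 β σh δ c f (Y s))
      (f (Y t) - (1 - v) * (deriv (Phi β σh δ c) (Y t) / Phi β σh δ c (Y t)) *
        (Phi β σh δ c (Y t) * M1 β σh δ c f (Y t))) t := by
  have hΦ := ((contDiff_Phi (σh := σh) (c := c) hβ hδ 1).differentiable one_ne_zero
    (Y t)).hasDerivAt.comp t hY
  have hM1 := (hasDerivAt_M1 (c := c) hβ hσ hδ hf hfpos (Y t)).differentiableAt.hasDerivAt.comp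
    t hY
  refine (hΦ.mul hM1).congr_deriv ?_
  have h₀ := (Phi_pos (σh := σh) (c := c) hβ hδ (Y t)).ne'
  simp only [Function.comp_apply]
  field_simp
  linear_combination Phi β σh δ c (Y t) * hv +
    Phi_mul_M2_add_deriv_Phi_mul_M1 hβ hσ hδ hfpos (Y t)

end Boundary

open Boundary

theorem value_on_boundary_general (β σh δ c : ℝ) (hβ : 0 < β) (hσ : 0 < σh) (hδ : 0 < δ)
    (f : ℝ → ℝ) (hf : ContDiff ℝ 3 f)
    (hfpos : ∀ y : ℝ, 0 < f y)
    (hb : ∀ y : ℝ, deriv (fun z => deriv f z / f z) y <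
      deriv (fun z => deriv (Phi β σh δ c) z / Phi β σh δ c z) y)
    (hc : ∀ y : ℝ, deriv (fun z => deriv f z / f z) y <
      deriv (fun z => deriv (deriv (Phi β σh δ c)) z / deriv (Phi β σh δ c) z) y)
    (y₀ yinf : ℝ)
    (hy₀ : deriv f y₀ / f y₀ = deriv (Phi β σh δ c) y₀ / Phi β σh δ c y₀)
    (hyinf : deriv f yinf / f yinf =
      deriv (deriv (Phi β σh δ c)) yinf / deriv (Phi β σh δ c) yinf)
    (Θ : ℝ) (hΘ : 0 < Θ) (Y Yd : ℝ → ℝ) (hY0 : Y 0 = y₀)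
    (hYd : ∀ ℓ ∈ Set.Icc (0 : ℝ) Θ, HasDerivWithinAt Y (Yd ℓ) (Set.Icc 0 Θ) ℓ)
    (hODE : ∀ ℓ ∈ Set.Icc (0 : ℝ) Θ,
      Yd ℓ = M2 β σh δ c f (Y ℓ) / deriv (M1 β σh δ c f) (Y ℓ)) :
    let r : ℝ → ℝ := fun ℓ =>
      ∫ x in (0 : ℝ)..ℓ, (1 - Yd x) * (deriv (Phi β σh δ c) (Y x) / Phi β σh δ c (Y x));
    Real.exp (-(r Θ)) * (∫ ℓ in (0 : ℝ)..Θ, f (Y ℓ) * Real.exp (r ℓ)) =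
      Phi β σh δ c (Y Θ) * M1 β σh δ c f (Y Θ) := by
  intro r
  have hG₀ : G β σh δ c f y₀ = 0 := sub_eq_zero.2 hy₀
  have hH₀ : H β σh δ c f yinf = 0 := sub_eq_zero.2 hyinf
  have hM1₀ : M1 β σh δ c f y₀ = 0 := by simp [M1_eq hβ hσ hδ hfpos, hG₀]
  have hG' := deriv_G_neg hβ hδ hf hfpos hb
  have hH' := deriv_H_neg hβ hσ hδ hf hfpos hc
  have hmaps := mapsTo_Icc_of_hasDerivWithinAt hβ hσ hδ hf hfpos hG' hH' hG₀ hH₀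
    (fun ℓ hℓ => hODE ℓ hℓ ▸ hYd ℓ hℓ) hY0
  have hM1' : ∀ ℓ ∈ Icc 0 Θ, deriv (M1 β σh δ c f) (Y ℓ) ≠ 0 := fun ℓ hℓ =>
    (deriv_M1_neg_of_mem_Icc hβ hσ hδ hf hfpos hG' hH' hG₀ hH₀ (hmaps hℓ)).ne
  have hYc : ContinuousOn Y (Icc 0 Θ) := fun ℓ hℓ => (hYd ℓ hℓ).continuousWithinAt
  have hYdc : ContinuousOn Yd (Icc 0 Θ) :=
    (((continuous_M2 hβ hσ hδ hf hfpos).comp_continuousOn hYc).div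
      ((continuous_deriv_M1 hβ hσ hδ hf hfpos).comp_continuousOn hYc) hM1').congr hODE
  have hΦ := contDiff_Phi (σh := σh) (c := c) hβ hδ 1
  have hΦY := hΦ.continuous.comp_continuousOn hYc
  have hM1Y := (continuous_M1 (c := c) hβ hσ hδ hf hfpos).comp_continuousOn hYc
  have key := integral_mul_exp_integral_eq
    (V := fun ℓ => Phi β σh δ c (Y ℓ) * M1 β σh δ c f (Y ℓ)) (g := fun ℓ => f (Y ℓ))
    (q := fun ℓ => (1 - Yd ℓ) * (deriv (Phi β σh δ c) (Y ℓ) / Phi β σh δ c (Y ℓ))) hΘ.le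
    (hΦY.mul hM1Y) ((continuousOn_const.sub hYdc).mul
      (((hΦ.continuous_deriv le_rfl).comp_continuousOn hYc).div hΦY fun ℓ _ =>
        (Phi_pos hβ hδ (Y ℓ)).ne'))
    (hf.continuous.comp_continuousOn hYc) fun t ht =>
      hasDerivAt_Phi_comp_mul_M1_comp hβ hσ hδ hf hfpos
        ((hYd t (Ioo_subset_Icc_self ht)).hasDerivAt (Icc_mem_nhds ht.1 ht.2))
        (by rw [hODE t (Ioo_subset_Icc_self ht)]; field_simp [hM1' t (Ioo_subset_Icc_self ht)])
  rwa [hY0, hM1₀, mul_zero, mul_zero, sub_zero] at key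

/-- Lemma 4.6 (value on the boundary): for the solution `𝕪` of the boundary ODE with
`𝕪(0) = y₀`, the expected proceeds of the `𝕪`-reflected strategy satisfy
`exp(-𝕣(Θ))·∫₀^Θ f(𝕪(ℓ))·exp(𝕣(ℓ)) dℓ = Φ(𝕪(Θ))·M₁(𝕪(Θ))`. -/
theorem value_on_boundary (β σh δ c : ℝ) (hβ : 0 < β) (hσ : 0 < σh) (hδ : 0 < δ)
    (f : ℝ → ℝ) (hf : ContDiff ℝ 3 f)
    (hfpos : ∀ y : ℝ, 0 < f y) (hf'pos : ∀ y : ℝ, 0 < deriv f y)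
    (hb : ∀ y : ℝ, deriv (fun z => deriv f z / f z) y <
      deriv (fun z => deriv (Phi β σh δ c) z / Phi β σh δ c z) y)
    (hc : ∀ y : ℝ, deriv (fun z => deriv f z / f z) y <
      deriv (fun z => deriv (deriv (Phi β σh δ c)) z / deriv (Phi β σh δ c) z) y)
    (y₀ yinf : ℝ)
    (hy₀ : deriv f y₀ / f y₀ = deriv (Phi β σh δ c) y₀ / Phi β σh δ c y₀)
    (hyinf : deriv f yinf / f yinf =
      deriv (deriv (Phi β σh δ c)) yinf / deriv (Phi β σh δ c) yinf)
    (Θ : ℝ) (hΘ : 0 < Θ) (Y Yd : ℝ → ℝ) (hY0 : Y 0 = y₀)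
    (hYd : ∀ ℓ ∈ Set.Icc (0 : ℝ) Θ, HasDerivWithinAt Y (Yd ℓ) (Set.Icc 0 Θ) ℓ)
    (hODE : ∀ ℓ ∈ Set.Icc (0 : ℝ) Θ,
      Yd ℓ = M2 β σh δ c f (Y ℓ) / deriv (M1 β σh δ c f) (Y ℓ)) :
    let r : ℝ → ℝ := fun ℓ =>
      ∫ x in (0 : ℝ)..ℓ, (1 - Yd x) * (deriv (Phi β σh δ c) (Y x) / Phi β σh δ c (Y x));
    Real.exp (-(r Θ)) * (∫ ℓ in (0 : ℝ)..Θ, f (Y ℓ) * Real.exp (r ℓ)) =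
      Phi β σh δ c (Y Θ) * M1 β σh δ c f (Y Θ) :=
  value_on_boundary_general β σh δ c hβ hσ hδ f hf hfpos hb hc y₀ yinf hy₀ hyinf Θ hΘ Y Yd hY0 hYd
    hODE
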